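/- Let 0 < α ≤ 1 and let X be a random variable with the Pareto distribution with tail index α. Then there exists a constant C > 0 such that for every b ≥ e: E[ |X·1{X ≤ b} − E[X·1{X ≤ b}]|³ ] ≤ C · b^{α/2} · ( Var(X·1{X ≤ b}) )^{3/2}. (Consequently, for i.i.d. copies X_1, …, X_n and truncation level b_n, the Lyapunov ratio Σ_{k=1}^n E|X_k(b_n) − μ_n|³ / (n·Var(X_1(b_n)))^{3/2} is bounded by C·(b_n^α/n)^{1/2}.) -/

import Mathlib

/-!
The truncated variable `Y = X·1{X ≤ b}` takes values in `[0, b]`, so `|Y - EY| ≤ b` and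
`E|Y - EY|³ ≤ b · Var Y`. Conversely `Y ≤ 5/4` with probability `1 - (5/4)^(-α)` and
`Y > 4b/5` with probability `((5/4)^α - 1) b^(-α)`; one of these two sets lies at distance
`≥ b/10` from `EY`, so Chebyshev's inequality gives `Var Y ≳ b^(2-α)`, i.e.
`b ≲ b^(α/2) (Var Y)^(1/2)`. The Lyapunov ratio has `n` equal terms because Pareto variables
with the same index are identically distributed.
-/

open MeasureTheory ProbabilityTheory Real Set

/-- `trunc b x = x · 1{x ≤ b}` : truncation of a value at level `b`. -/
noncomputable def trunc (b x : ℝ) : ℝ := if x ≤ b then x else 0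

/-- `X` is a Pareto random variable with tail index `α`:
`X` is measurable and `P(X ≤ x) = 1 - x^{-α}` for all `x ≥ 1`. -/
def IsParetoRV {Ω : Type*} [MeasurableSpace Ω] (P : Measure Ω) (X : Ω → ℝ)
    (α : ℝ) : Prop :=
  Measurable X ∧ ∀ x : ℝ, 1 ≤ x → P {ω | X ω ≤ x} = ENNReal.ofReal (1 - x ^ (-α))

lemma measurable_trunc (b : ℝ) : Measurable (trunc b) :=
  Measurable.ite measurableSet_Iic measurable_id measurable_const

lemma five_halves_lt_exp_one : (5 / 2 : ℝ) < exp 1 :=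
  lt_trans (by norm_num) exp_one_gt_d9

lemma mul_le_mul_rpow_three_halves {b c V α : ℝ} (hb : 0 < b) (hc : 0 < c)
    (hV : c * b ^ (2 - α) ≤ V) :
    b * V ≤ c ^ (-(1 : ℝ) / 2) * b ^ (α / 2) * V ^ ((3 : ℝ) / 2) := by
  have hV0 : 0 < V := lt_of_lt_of_le (by positivity) hV
  have hc1 : c ^ (-(1 : ℝ) / 2) * c ^ ((1 : ℝ) / 2) = 1 := by
    rw [← rpow_add hc]; norm_num
  have hb1 : b ^ (α / 2) * b ^ ((2 - α) * (1 / 2)) = b := by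
    rw [← rpow_add hb, show α / 2 + (2 - α) * (1 / 2) = 1 by ring, rpow_one]
  have hb_eq : b = c ^ (-(1 : ℝ) / 2) * b ^ (α / 2) * (c * b ^ (2 - α)) ^ ((1 : ℝ) / 2) := by
    rw [mul_rpow hc.le (by positivity), ← rpow_mul hb.le]
    linear_combination (-(b ^ (α / 2) * b ^ ((2 - α) * (1 / 2)))) * hc1 - hb1
  have hb_le : b ≤ c ^ (-(1 : ℝ) / 2) * b ^ (α / 2) * V ^ ((1 : ℝ) / 2) := by
    conv_lhs => rw [hb_eq]
    gcongr
  calc b * V ≤ c ^ (-(1 : ℝ) / 2) * b ^ (α / 2) * V ^ ((1 : ℝ) / 2) * V := by gcongr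
    _ = c ^ (-(1 : ℝ) / 2) * b ^ (α / 2) * V ^ ((3 : ℝ) / 2) := by
      rw [show (3 : ℝ) / 2 = 1 / 2 + 1 by norm_num, rpow_add hV0, rpow_one]; ring

lemma mul_div_mul_rpow_three_halves_le {n I V B C : ℝ} (hn : 0 < n) (hV : 0 < V) (hB : 0 ≤ B)
    (hI : I ≤ C * B ^ ((1 : ℝ) / 2) * V ^ ((3 : ℝ) / 2)) :
    n * I / (n * V) ^ ((3 : ℝ) / 2) ≤ C * (B / n) ^ ((1 : ℝ) / 2) := by
  have hsplit : (n * V) ^ ((3 : ℝ) / 2) = n * n ^ ((1 : ℝ) / 2) * V ^ ((3 : ℝ) / 2) := by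
    rw [mul_rpow hn.le hV.le, show (3 : ℝ) / 2 = 1 + 1 / 2 by norm_num, rpow_add hn, rpow_one]
  rw [hsplit, div_rpow hB hn.le, div_le_iff₀ (by positivity)]
  calc n * I ≤ n * (C * B ^ ((1 : ℝ) / 2) * V ^ ((3 : ℝ) / 2)) := by gcongr
    _ = _ := by field_simp

section Moments

variable {Ω : Type*} [MeasurableSpace Ω] {P : Measure Ω} {Y : Ω → ℝ}

lemma ae_abs_sub_integral_le_of_ae_mem_Icc [IsProbabilityMeasure P] (hY : Integrable Y P)
    {a b : ℝ} (h : ∀ᵐ ω ∂P, Y ω ∈ Icc a b) : ∀ᵐ ω ∂P, |Y ω - P[Y]| ≤ b - a := by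
  have hlo : a ≤ P[Y] := by
    simpa using integral_mono_ae (integrable_const a) hY (h.mono fun _ hω => hω.1)
  have hhi : P[Y] ≤ b := by
    simpa using integral_mono_ae hY (integrable_const b) (h.mono fun _ hω => hω.2)
  filter_upwards [h] with ω hω
  exact abs_sub_le_of_le_of_le hω.1 hω.2 hlo hhi

lemma integral_abs_sub_integral_pow_three_le [IsFiniteMeasure P] (hY : AEMeasurable Y P)
    {c : ℝ} (h : ∀ᵐ ω ∂P, |Y ω - P[Y]| ≤ c) :
    ∫ ω, |Y ω - P[Y]| ^ 3 ∂P ≤ c * variance Y P := by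
  rw [variance_eq_integral hY, ← integral_const_mul]
  refine integral_mono_of_nonneg (.of_forall fun _ => by positivity) ?_ ?_
  · refine Integrable.of_bound (by fun_prop) (c * c ^ 2) ?_
    filter_upwards [h] with ω hω
    rw [norm_mul, norm_pow, Real.norm_eq_abs, Real.norm_eq_abs,
      abs_of_nonneg ((abs_nonneg _).trans hω)]
    gcongr
    exact (abs_nonneg _).trans hω
  · filter_upwards [h] with ω hω
    calc |Y ω - P[Y]| ^ 3 = |Y ω - P[Y]| * (Y ω - P[Y]) ^ 2 := by rw [← sq_abs]; ring
      _ ≤ c * (Y ω - P[Y]) ^ 2 := by gcongr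

lemma sq_mul_min_measureReal_le_variance [IsFiniteMeasure P] (hY : MemLp Y 2 P)
    {A B : Set Ω} {s t d : ℝ} (hd : 0 < d) (hst : s + 2 * d ≤ t)
    (hA : ∀ ω ∈ A, Y ω ≤ s) (hB : ∀ ω ∈ B, t ≤ Y ω) :
    d ^ 2 * min (P.real A) (P.real B) ≤ variance Y P := by
  have chebyshev :
      ∀ S : Set Ω, (∀ ω ∈ S, d ≤ |Y ω - P[Y]|) → d ^ 2 * P.real S ≤ variance Y P := by
    intro S hS
    have hle : P S ≤ ENNReal.ofReal (variance Y P / d ^ 2) :=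
      (measure_mono hS).trans (meas_ge_le_variance_div_sq hY hd)
    have := ENNReal.toReal_le_of_le_ofReal (by have := variance_nonneg Y P; positivity) hle
    rw [← measureReal_def, le_div_iff₀ (by positivity)] at this
    linarith
  rcases le_total P[Y] ((s + t) / 2) with hμ | hμ
  · refine le_trans ?_ (chebyshev B fun ω hω => ?_)
    · gcongr; exact min_le_right _ _
    · have := hB ω hω
      rw [abs_of_nonneg (by linarith)]; linarith
  · refine le_trans ?_ (chebyshev A fun ω hω => ?_)
    · gcongr; exact min_le_left _ _
    · have := hA ω hω
      rw [abs_of_nonpos (by linarith)]; linarith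

end Moments

namespace IsParetoRV

variable {Ω : Type*} [MeasurableSpace Ω] {P : Measure Ω} {X : Ω → ℝ} {α : ℝ}

lemma measureReal_Iic (h : IsParetoRV P X α) (hα : 0 ≤ α) {x : ℝ} (hx : 1 ≤ x) :
    P.real (X ⁻¹' Iic x) = 1 - x ^ (-α) := by
  rw [measureReal_def, show X ⁻¹' Iic x = {ω | X ω ≤ x} from rfl, h.2 x hx,
    ENNReal.toReal_ofReal (sub_nonneg.2 (rpow_le_one_of_one_le_of_nonpos hx (by linarith)))]

lemma measureReal_Ioc [IsFiniteMeasure P] (h : IsParetoRV P X α) (hα : 0 ≤ α) {x y : ℝ}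
    (hx : 1 ≤ x) (hxy : x ≤ y) : P.real (X ⁻¹' Ioc x y) = x ^ (-α) - y ^ (-α) := by
  rw [← Iic_sdiff_Iic, preimage_sdiff, measureReal_sdiff (preimage_mono (Iic_subset_Iic.2 hxy))
    (h.1 measurableSet_Iic), h.measureReal_Iic hα (hx.trans hxy), h.measureReal_Iic hα hx]
  ring

lemma ae_one_lt (h : IsParetoRV P X α) : ∀ᵐ ω ∂P, 1 < X ω := by
  rw [ae_iff]
  simpa using h.2 1 le_rfl

lemma ae_trunc_mem_Icc (h : IsParetoRV P X α) {b : ℝ} (hb : 0 ≤ b) :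
    ∀ᵐ ω ∂P, trunc b (X ω) ∈ Icc 0 b := by
  filter_upwards [h.ae_one_lt] with ω hω
  unfold trunc
  split_ifs with hXb
  · exact ⟨by linarith, hXb⟩
  · exact ⟨le_rfl, hb⟩

lemma memLp_trunc [IsFiniteMeasure P] (h : IsParetoRV P X α) {b : ℝ} (hb : 0 ≤ b)
    (p : ENNReal) : MemLp (fun ω => trunc b (X ω)) p P := by
  refine (memLp_top_of_bound ((measurable_trunc b).comp h.1).aestronglyMeasurable b ?_)
    |>.mono_exponent le_top
  filter_upwards [h.ae_trunc_mem_Icc hb] with ω hω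
  rw [Function.comp_apply, Real.norm_eq_abs, abs_of_nonneg hω.1]
  exact hω.2

lemma identDistrib [IsProbabilityMeasure P] {X' : Ω → ℝ} (h : IsParetoRV P X α)
    (h' : IsParetoRV P X' α) : IdentDistrib X X' P P := by
  have cdf : ∀ {Z : Ω → ℝ}, IsParetoRV P Z α → ∀ a : ℝ,
      P.map Z (Iic a) = if 1 ≤ a then ENNReal.ofReal (1 - a ^ (-α)) else 0 := by
    intro Z hZ a
    rw [Measure.map_apply hZ.1 measurableSet_Iic]
    split_ifs with ha
    · exact hZ.2 a ha
    · refine measure_mono_null (preimage_mono (Iic_subset_Iic.2 (not_le.1 ha).le)) ?_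
      simpa [preimage, Iic] using hZ.2 1 le_rfl
  refine ⟨h.1.aemeasurable, h'.1.aemeasurable, ?_⟩
  have := Measure.isProbabilityMeasure_map (μ := P) h.1.aemeasurable
  exact Measure.ext_of_Iic _ _ fun a => by rw [cdf h, cdf h']

lemma variance_trunc_ge [IsProbabilityMeasure P] (h : IsParetoRV P X α) (hα : 0 ≤ α) {b : ℝ}
    (hb : 5 / 2 ≤ b) :
    (1 - (5 / 4 : ℝ) ^ (-α)) / 100 * b ^ (2 - α) ≤ variance (fun ω => trunc b (X ω)) P := by
  have hb0 : 0 < b := by linarith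
  set q := 1 - (5 / 4 : ℝ) ^ (-α)
  set r := (5 / 4 : ℝ) ^ α
  have hr : 1 ≤ r := one_le_rpow (by norm_num) hα
  have hq : q = 1 - r⁻¹ := by simp only [q, r, rpow_neg (by norm_num : (0 : ℝ) ≤ 5 / 4)]
  have hbα : b ^ (-α) ≤ 1 := rpow_le_one_of_one_le_of_nonpos (by linarith) (by linarith)
  have hA : P.real (X ⁻¹' Iic (5 / 4)) = q := h.measureReal_Iic hα (by norm_num)
  have hB : P.real (X ⁻¹' Ioc (4 * b / 5) b) = (r - 1) * b ^ (-α) := by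
    rw [h.measureReal_Ioc hα (by linarith) (by linarith), show 4 * b / 5 = (5 / 4)⁻¹ * b by ring,
      mul_rpow (by norm_num) hb0.le, inv_rpow (by norm_num), rpow_neg (by norm_num), inv_inv]
    ring
  have hmin :
      q * b ^ (-α) ≤ min (P.real (X ⁻¹' Iic (5 / 4))) (P.real (X ⁻¹' Ioc (4 * b / 5) b)) := by
    have hq0 : 0 ≤ q := by rw [hq]; exact sub_nonneg.2 (inv_le_one_of_one_le₀ hr)
    have hqr : q ≤ r - 1 := by
      rw [hq, inv_eq_one_div, ← sub_nonneg]
      field_simp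
      nlinarith
    rw [hA, hB]
    exact le_min (mul_le_of_le_one_right hq0 hbα) (by gcongr)
  have hvar := sq_mul_min_measureReal_le_variance (h.memLp_trunc hb0.le 2)
    (A := X ⁻¹' Iic (5 / 4)) (B := X ⁻¹' Ioc (4 * b / 5) b) (s := 5 / 4) (t := 4 * b / 5)
    (d := b / 10) (by positivity) (by linarith)
    (fun ω (hω : X ω ≤ 5 / 4) => by rw [trunc, if_pos (by linarith)]; exact hω)
    (fun ω hω => by rw [trunc, if_pos hω.2]; exact hω.1.le)
  calc q / 100 * b ^ (2 - α) = (b / 10) ^ 2 * (q * b ^ (-α)) := by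
        rw [sub_eq_add_neg, rpow_add hb0, rpow_two]; ring
    _ ≤ _ := le_trans (by gcongr) hvar

lemma integral_abs_trunc_sub_pow_three_le [IsProbabilityMeasure P] (h : IsParetoRV P X α)
    {b : ℝ} (hb : 0 ≤ b) :
    ∫ ω, |trunc b (X ω) - ∫ ω', trunc b (X ω') ∂P| ^ 3 ∂P ≤
      b * variance (fun ω => trunc b (X ω)) P := by
  have hbound := ae_abs_sub_integral_le_of_ae_mem_Icc ((h.memLp_trunc hb 1).integrable le_rfl)
    (h.ae_trunc_mem_Icc hb)
  rw [sub_zero] at hbound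
  exact integral_abs_sub_integral_pow_three_le ((measurable_trunc b).comp h.1).aemeasurable hbound

end IsParetoRV

theorem lyapunov_third_moment_bound_general {Ω : Type*} [MeasurableSpace Ω]
    (P : Measure Ω) [IsProbabilityMeasure P]
    (α : ℝ) (hα0 : 0 < α)
    (X : ℕ → Ω → ℝ)
    (hPar : ∀ k, IsParetoRV P (X k) α) :
    ∃ C : ℝ, 0 < C ∧
      (∀ b : ℝ, Real.exp 1 ≤ b →
        ∫ ω, |trunc b (X 0 ω) - ∫ ω', trunc b (X 0 ω') ∂P| ^ 3 ∂P ≤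
          C * b ^ (α / 2) *
            (variance (fun ω => trunc b (X 0 ω)) P) ^ ((3 : ℝ) / 2)) ∧
      (∀ (b : ℕ → ℝ) (n : ℕ), 1 ≤ n → Real.exp 1 ≤ b n →
        (∑ k ∈ Finset.range n,
            ∫ ω, |trunc (b n) (X k ω) - ∫ ω', trunc (b n) (X 0 ω') ∂P| ^ 3 ∂P) /
          ((n : ℝ) * variance (fun ω => trunc (b n) (X 0 ω)) P) ^ ((3 : ℝ) / 2) ≤
          C * ((b n) ^ α / n) ^ ((1 : ℝ) / 2)) := by
  set c := (1 - (5 / 4 : ℝ) ^ (-α)) / 100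
  have hc : 0 < c := by
    have : (5 / 4 : ℝ) ^ (-α) < 1 := rpow_lt_one_of_one_lt_of_neg (by norm_num) (by linarith)
    positivity
  have hvar (b : ℝ) (hb : exp 1 ≤ b) :
      c * b ^ (2 - α) ≤ variance (fun ω => trunc b (X 0 ω)) P :=
    (hPar 0).variance_trunc_ge hα0.le (five_halves_lt_exp_one.le.trans hb)
  have hmoment (b : ℝ) (hb : exp 1 ≤ b) :
      ∫ ω, |trunc b (X 0 ω) - ∫ ω', trunc b (X 0 ω') ∂P| ^ 3 ∂P ≤
        c ^ (-(1 : ℝ) / 2) * b ^ (α / 2) *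
          variance (fun ω => trunc b (X 0 ω)) P ^ ((3 : ℝ) / 2) :=
    have hb0 : 0 < b := (exp_pos 1).trans_le hb
    ((hPar 0).integral_abs_trunc_sub_pow_three_le hb0.le).trans
      (mul_le_mul_rpow_three_halves hb0 hc (hvar b hb))
  refine ⟨c ^ (-(1 : ℝ) / 2), by positivity, hmoment, fun b n hn hb => ?_⟩
  have hsame (k : ℕ) :
      ∫ ω, |trunc (b n) (X k ω) - ∫ ω', trunc (b n) (X 0 ω') ∂P| ^ 3 ∂P =
        ∫ ω, |trunc (b n) (X 0 ω) - ∫ ω', trunc (b n) (X 0 ω') ∂P| ^ 3 ∂P :=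
    (((hPar k).identDistrib (hPar 0)).comp
      (((measurable_trunc (b n)).sub_const _).abs.pow_const 3)).integral_eq
  rw [Finset.sum_congr rfl fun k _ => hsame k, Finset.sum_const, Finset.card_range, nsmul_eq_mul]
  have hb0 : 0 < b n := (exp_pos 1).trans_le hb
  refine mul_div_mul_rpow_three_halves_le (by exact_mod_cast hn)
    ((mul_pos hc (by positivity)).trans_le (hvar (b n) hb)) (by positivity) ?_
  rw [← rpow_mul hb0.le, mul_one_div]
  exact hmoment (b n) hb

theorem lyapunov_third_moment_bound {Ω : Type*} [MeasurableSpace Ω]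
    (P : Measure Ω) [IsProbabilityMeasure P]
    (α : ℝ) (hα0 : 0 < α) (hα1 : α ≤ 1)
    (X : ℕ → Ω → ℝ)
    (hiid : iIndepFun X P)
    (hPar : ∀ k, IsParetoRV P (X k) α) :
    ∃ C : ℝ, 0 < C ∧
      (∀ b : ℝ, Real.exp 1 ≤ b →
        ∫ ω, |trunc b (X 0 ω) - ∫ ω', trunc b (X 0 ω') ∂P| ^ 3 ∂P ≤
          C * b ^ (α / 2) *
            (variance (fun ω => trunc b (X 0 ω)) P) ^ ((3 : ℝ) / 2)) ∧
      (∀ (b : ℕ → ℝ) (n : ℕ), 1 ≤ n → Real.exp 1 ≤ b n →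
        (∑ k ∈ Finset.range n,
            ∫ ω, |trunc (b n) (X k ω) - ∫ ω', trunc (b n) (X 0 ω') ∂P| ^ 3 ∂P) /
          ((n : ℝ) * variance (fun ω => trunc (b n) (X 0 ω)) P) ^ ((3 : ℝ) / 2) ≤
          C * ((b n) ^ α / n) ^ ((1 : ℝ) / 2)) :=
  lyapunov_third_moment_bound_general P α hα0 X hPar
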